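/- If Γ is a graph of order n with minimum degree δ > 0, then the global offensive 0-alliance number satisfies γ_0^o(Γ) ≤ n/2. -/
import Mathlib


open Finset

variable {V V₁ V₂ : Type*}

/-- Number of neighbors of `v` lying in `S`. -/
def degOn [Fintype V] [DecidableEq V] (G : SimpleGraph V) [DecidableRel G.Adj]
    (S : Finset V) (v : V) : ℕ :=
  (G.neighborFinset v ∩ S).card

/-- `S` is a dominating set of `G`. -/
def IsDominating [Fintype V] (G : SimpleGraph V) (S : Finset V) : Prop :=
  ∀ v ∉ S, ∃ u ∈ S, G.Adj u v

/-- `S` is a global offensive `k`-alliance in `G`. -/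
def IsGOA [Fintype V] [DecidableEq V] (G : SimpleGraph V) [DecidableRel G.Adj]
    (k : ℤ) (S : Finset V) : Prop :=
  IsDominating G S ∧ ∀ v ∉ S, (degOn G Sᶜ v : ℤ) + k ≤ (degOn G S v : ℤ)

/-- `S` is an offensive `k`-alliance in `G`: it is nonempty and every boundary
vertex has at least `k` more neighbors inside `S` than outside. -/
def IsOA [Fintype V] [DecidableEq V] (G : SimpleGraph V) [DecidableRel G.Adj]
    (k : ℤ) (S : Finset V) : Prop :=
  S.Nonempty ∧ ∀ v ∉ S, (∃ u ∈ S, G.Adj u v) →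
    (degOn G Sᶜ v : ℤ) + k ≤ (degOn G S v : ℤ)

/-- `S` is an `r`-dependent set in `G`. -/
def IsDependent [Fintype V] [DecidableEq V] (G : SimpleGraph V) [DecidableRel G.Adj]
    (r : ℕ) (S : Finset V) : Prop :=
  ∀ v ∈ S, degOn G S v ≤ r

/-- `S` is a `τ`-dominating set in `G`. -/
def IsTauDominating [Fintype V] [DecidableEq V] (G : SimpleGraph V) [DecidableRel G.Adj]
    (τ : ℝ) (S : Finset V) : Prop :=
  ∀ v ∉ S, τ * (G.degree v : ℝ) ≤ (degOn G S v : ℝ)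

/-- The global offensive `k`-alliance number of `G`. -/
noncomputable def goaNum [Fintype V] [DecidableEq V] (G : SimpleGraph V)
    [DecidableRel G.Adj] (k : ℤ) : ℕ :=
  sInf {t | ∃ S : Finset V, IsGOA G k S ∧ S.card = t}

/-- The maximum cardinality of an `r`-dependent set in `G`. -/
noncomputable def depNum [Fintype V] [DecidableEq V] (G : SimpleGraph V)
    [DecidableRel G.Adj] (r : ℕ) : ℕ :=
  sSup {t | ∃ S : Finset V, IsDependent G r S ∧ S.card = t}

section Aux

variable [Fintype V] [DecidableEq V] (G : SimpleGraph V) [DecidableRel G.Adj]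

lemma degOn_eq_sum (S : Finset V) (v : V) :
    degOn G S v = ∑ u ∈ S, if G.Adj v u then 1 else 0 := by
  rw [degOn]
  have : G.neighborFinset v ∩ S = S.filter (fun u => G.Adj v u) := by
    ext u; simp [and_comm]
  rw [this, Finset.card_filter]

lemma degOn_add_degOn_compl (S : Finset V) (v : V) :
    degOn G S v + degOn G Sᶜ v = G.degree v := by
  rw [degOn, degOn, ← SimpleGraph.card_neighborFinset_eq_degree]
  rw [← Finset.card_union_of_disjoint]
  · congr 1
    rw [← Finset.inter_union_distrib_left, Finset.union_compl, Finset.inter_univ]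
  · exact Finset.disjoint_left.2 fun a ha hb => by
      simp only [Finset.mem_inter, Finset.mem_compl] at ha hb
      exact hb.2 ha.2

/-- cut size -/
def cutF (S : Finset V) : ℕ := ∑ w ∈ Sᶜ, degOn G S w

lemma cut_insert {S : Finset V} {v : V} (hv : v ∉ S) :
    cutF G (insert v S) + degOn G S v = cutF G S + degOn G Sᶜ v := by
  have hvc : v ∈ Sᶜ := Finset.mem_compl.2 hv
  have h1 : cutF G (insert v S)
      = (∑ w ∈ Sᶜ.erase v, degOn G S w) + degOn G Sᶜ v := by
    rw [cutF, Finset.compl_insert]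
    have : ∀ w ∈ Sᶜ.erase v, degOn G (insert v S) w
        = degOn G S w + (if G.Adj w v then 1 else 0) := by
      intro w hw
      rw [degOn_eq_sum, degOn_eq_sum, Finset.sum_insert hv, add_comm]
    rw [Finset.sum_congr rfl this, Finset.sum_add_distrib]
    congr 1
    have h2 : ∑ w ∈ Sᶜ.erase v, (if G.Adj w v then 1 else 0)
        = ∑ w ∈ Sᶜ, (if G.Adj w v then 1 else 0) := by
      rw [← Finset.sum_erase_add _ _ hvc]
      simp [G.irrefl]
    rw [h2, degOn_eq_sum]
    exact Finset.sum_congr rfl fun w _ => by simp [G.adj_comm v w]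
  rw [h1]
  have := Finset.sum_erase_add Sᶜ (degOn G S) hvc
  rw [cutF]
  omega

lemma goa_from_max {S : Finset V} (hδ : 0 < G.minDegree)
    (h : ∀ v ∉ S, degOn G Sᶜ v ≤ degOn G S v) : IsGOA G 0 S := by
  constructor
  · intro v hv
    have hdeg : 0 < G.degree v := lt_of_lt_of_le hδ (G.minDegree_le_degree v)
    have hsum := degOn_add_degOn_compl G S v
    have hpos : 0 < degOn G S v := by
      have := h v hv; omega
    rw [degOn, Finset.card_pos] at hpos
    obtain ⟨u, hu⟩ := hpos
    simp only [Finset.mem_inter, SimpleGraph.mem_neighborFinset] at hu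
    exact ⟨u, hu.2, hu.1.symm⟩
  · intro v hv
    have := h v hv
    omega

end Aux

theorem stmt_9 [Fintype V] [DecidableEq V] (G : SimpleGraph V) [DecidableRel G.Adj]
    (hδ : 0 < G.minDegree) :
    (goaNum G 0 : ℝ) ≤ (Fintype.card V : ℝ) / 2 := by
  obtain ⟨S, -, hmax⟩ := Finset.exists_max_image (Finset.univ : Finset (Finset V))
    (cutF G) ⟨∅, Finset.mem_univ _⟩
  have hmax' : ∀ T : Finset V, cutF G T ≤ cutF G S := fun T => hmax T (Finset.mem_univ T)
  -- S is a GOA 0-alliance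
  have hS : IsGOA G 0 S := by
    apply goa_from_max G hδ
    intro v hv
    have := cut_insert G hv
    have := hmax' (insert v S)
    omega
  -- Sᶜ is a GOA 0-alliance
  have hSc : IsGOA G 0 Sᶜ := by
    apply goa_from_max G hδ
    intro v hv
    rw [Finset.mem_compl, not_not] at hv
    have hve : v ∉ S.erase v := Finset.notMem_erase v S
    have hins : insert v (S.erase v) = S := Finset.insert_erase hv
    have hci := cut_insert G hve
    rw [hins] at hci
    have hle := hmax' (S.erase v)
    have e1 : degOn G (S.erase v) v = degOn G S v := by
      rw [degOn, degOn]
      congr 1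
      rw [Finset.inter_erase]
      exact Finset.erase_eq_of_notMem (by simp)
    have e2 : degOn G (S.erase v)ᶜ v = degOn G Sᶜ v := by
      rw [degOn, degOn]
      congr 1
      rw [Finset.compl_erase, Finset.inter_insert_of_notMem (by simp)]
    rw [compl_compl]
    omega
  have h1 : goaNum G 0 ≤ S.card := Nat.sInf_le ⟨S, hS, rfl⟩
  have h2 : goaNum G 0 ≤ Sᶜ.card := Nat.sInf_le ⟨Sᶜ, hSc, rfl⟩
  have h3 : S.card + Sᶜ.card = Fintype.card V := by
    have := Finset.card_le_univ S
    rw [Finset.card_compl]; omega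
  have key : 2 * goaNum G 0 ≤ Fintype.card V := by omega
  have : (2 * goaNum G 0 : ℝ) ≤ (Fintype.card V : ℝ) := by exact_mod_cast key
  linarith
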